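/- arXiv:0901.1697 — 6 statements merged into one kernel-verified Lean document; each statement's English description precedes it below -/
import Mathlib

section
/- Let q be a complex number with |q| < 1 and let r be a positive integer. Then for every complex z with |z| < 1, one has 1/∏_{i=0}^{r-1}(1 - z q^i) = Σ_{n=0}^∞ qbinom(n+r-1, n; q) z^n, where qbinom denotes the Gaussian (q-)binomial coefficient. -/
open Finset

/-- Gaussian (q-)binomial coefficient `qbinom a b q = ∏_{i=1}^{b} (1 - q^{a-b+i})/(1 - q^i)`. -/
noncomputable def qbinom (a b : ℕ) (q : ℂ) : ℂ :=
  ∏ i ∈ Finset.range b, (1 - q ^ (a - b + i + 1)) / (1 - q ^ (i + 1))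

/-- numerator -/
noncomputable def qN (q : ℂ) (r n : ℕ) : ℂ := ∏ i ∈ Finset.range n, (1 - q ^ (r + i))
/-- denominator -/
noncomputable def qD (q : ℂ) (n : ℕ) : ℂ := ∏ i ∈ Finset.range n, (1 - q ^ (i + 1))
/-- coefficient -/
noncomputable def qc (q : ℂ) (r n : ℕ) : ℂ := qN q r n / qD q n

lemma qpow_ne_one (q : ℂ) (hq : ‖q‖ < 1) (i : ℕ) (hi : 1 ≤ i) : 1 - q ^ i ≠ 0 := by
  intro h
  have h1 : q ^ i = 1 := by linear_combination -h
  have : ‖q ^ i‖ < 1 := by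
    rw [norm_pow]; exact pow_lt_one₀ (norm_nonneg q) hq (by omega)
  rw [h1] at this; simp at this

lemma qD_ne (q : ℂ) (hq : ‖q‖ < 1) (n : ℕ) : qD q n ≠ 0 :=
  Finset.prod_ne_zero_iff.2 fun i _ => qpow_ne_one q hq (i + 1) (by omega)

lemma qN_succ (q : ℂ) (r n : ℕ) : qN q r (n + 1) = qN q r n * (1 - q ^ (r + n)) :=
  Finset.prod_range_succ _ _

lemma qN_succ' (q : ℂ) (r n : ℕ) : qN q r (n + 1) = (1 - q ^ r) * qN q (r + 1) n := by
  rw [qN, Finset.prod_range_succ']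
  simp only [add_zero, mul_comm]
  congr 1
  exact Finset.prod_congr rfl fun i _ => by rw [show r + (i + 1) = r + 1 + i by ring]

lemma qbinom_eq_qc (q : ℂ) (r n : ℕ) (hr : 1 ≤ r) :
    qbinom (n + r - 1) n q = qc q r n := by
  rw [qbinom, qc, qN, qD, ← Finset.prod_div_distrib]
  refine Finset.prod_congr rfl fun i _ => ?_
  have h : n + r - 1 - n + i + 1 = r + i := by omega
  rw [h]

lemma qc_pascal (q : ℂ) (hq : ‖q‖ < 1) (r n : ℕ) :
    qc q (r + 1) (n + 1) = q ^ r * qc q (r + 1) n + qc q r (n + 1) := by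
  have hD := qD_ne q hq n
  have hD1 := qD_ne q hq (n + 1)
  have hqD : qD q (n + 1) = qD q n * (1 - q ^ (n + 1)) := Finset.prod_range_succ _ _
  have h1 : 1 - q ^ (n + 1) ≠ 0 := qpow_ne_one q hq (n + 1) (by omega)
  rw [qc, qc, qc, qN_succ q (r+1) n, qN_succ' q r n, hqD]
  field_simp
  ring

lemma qc_sum (q : ℂ) (hq : ‖q‖ < 1) (r n : ℕ) :
    ∑ k ∈ Finset.range (n + 1), qc q r k * q ^ (r * (n - k)) = qc q (r + 1) n := by
  induction n with
  | zero => simp [qc, qN, qD]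
  | succ n ih =>
      rw [Finset.sum_range_succ]
      have : ∀ k ∈ Finset.range (n + 1), qc q r k * q ^ (r * (n + 1 - k))
          = q ^ r * (qc q r k * q ^ (r * (n - k))) := by
        intro k hk
        rw [Finset.mem_range] at hk
        rw [show r * (n + 1 - k) = r + r * (n - k) by
          have : n + 1 - k = (n - k) + 1 := by omega
          rw [this]; ring, pow_add]
        ring
      rw [Finset.sum_congr rfl this, ← Finset.mul_sum, ih]
      simp only [Nat.sub_self, Nat.mul_zero, pow_zero, mul_one]
      exact (qc_pascal q hq r n).symm

theorem qbinomial_theorem (q z : ℂ) (hq : ‖q‖ < 1) (hz : ‖z‖ < 1) (r : ℕ) (hr : 1 ≤ r) :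
    HasSum (fun n : ℕ => qbinom (n + r - 1) n q * z ^ n)
      (∏ i ∈ Finset.range r, (1 - z * q ^ i))⁻¹ := by
  have key : ∀ r : ℕ, 1 ≤ r → HasSum (fun n : ℕ => qc q r n * z ^ n)
      (∏ i ∈ Finset.range r, (1 - z * q ^ i))⁻¹ := by
    intro r hr
    induction r with
    | zero => omega
    | succ r ih =>
        rcases Nat.eq_or_lt_of_le hr with h | h
        · -- r + 1 = 1, i.e. r = 0
          have hr0 : r = 0 := by omega
          subst hr0
          simp only [qc, qN, qD]
          have : (fun n : ℕ => (∏ i ∈ Finset.range n, (1 - q ^ (1 + i))) /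
              (∏ i ∈ Finset.range n, (1 - q ^ (i + 1))) * z ^ n) = fun n : ℕ => z ^ n := by
            funext n
            rw [show (∏ i ∈ Finset.range n, (1 - q ^ (1 + i)))
              = ∏ i ∈ Finset.range n, (1 - q ^ (i + 1)) from
                Finset.prod_congr rfl fun i _ => by rw [add_comm],
              div_self (show (∏ i ∈ Finset.range n, (1 - q ^ (i + 1))) ≠ 0 from
                qD_ne q hq n), one_mul]
          rw [this]
          simpa using hasSum_geometric_of_norm_lt_one hz
        · have hr' : 1 ≤ r := by omega
          have IH := ih hr'
          -- geometric series in z * q^r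
          have hzq : ‖z * q ^ r‖ < 1 := by
            rw [norm_mul, norm_pow]
            calc ‖z‖ * ‖q‖ ^ r ≤ ‖z‖ * 1 := by
                  refine mul_le_mul_of_nonneg_left ?_ (norm_nonneg z)
                  exact pow_le_one₀ (norm_nonneg q) hq.le
              _ < 1 := by simpa using hz
          have hgeo : HasSum (fun n : ℕ => (z * q ^ r) ^ n) (1 - z * q ^ r)⁻¹ :=
            hasSum_geometric_of_norm_lt_one hzq
          have hfn : Summable fun n : ℕ => ‖qc q r n * z ^ n‖ := IH.summable.norm
          have hgn : Summable fun n : ℕ => ‖(z * q ^ r) ^ n‖ := hgeo.summable.norm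
          have hcauchy := hasSum_sum_range_mul_of_summable_norm hfn hgn
          rw [IH.tsum_eq, hgeo.tsum_eq] at hcauchy
          have heq : (fun n : ℕ => ∑ k ∈ Finset.range (n + 1),
              qc q r k * z ^ k * (z * q ^ r) ^ (n - k))
              = fun n : ℕ => qc q (r + 1) n * z ^ n := by
            funext n
            rw [← qc_sum q hq r n, Finset.sum_mul]
            refine Finset.sum_congr rfl fun k hk => ?_
            rw [Finset.mem_range] at hk
            have hzz : z ^ k * z ^ (n - k) = z ^ n := by
              rw [← pow_add]; congr 1; omega
            rw [mul_pow, ← pow_mul, ← hzz]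
            ring
          rw [heq] at hcauchy
          have hprod : (∏ i ∈ Finset.range (r + 1), (1 - z * q ^ i))⁻¹
              = (∏ i ∈ Finset.range r, (1 - z * q ^ i))⁻¹ * (1 - z * q ^ r)⁻¹ := by
            rw [Finset.prod_range_succ, mul_inv]
          rw [hprod]
          exact hcauchy
  have heq : (fun n : ℕ => qbinom (n + r - 1) n q * z ^ n)
      = fun n : ℕ => qc q r n * z ^ n := by
    funext n; rw [qbinom_eq_qc q r n hr]
  rw [heq]
  exact key r hr
end

section
/- Let q, w be complex numbers with |q| < 1, |w| < 1, q ≠ 1, let r ≥ 1 and n ≥ 0 be integers. Then the series 2^r Σ_{m=0}^∞ C(m+r-1, m) (-1)^m w^m [m]_q^n converges and equals (2^r/(1-q)^n) Σ_{l=0}^n C(n,l) (-1)^l (1/(1 + q^l w))^r. -/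
/-- The series defining the `q`-analogue of the `w`-Euler numbers of order `r` converges
and equals the finite sum expression. -/
theorem qEuler_number_hasSum (q w : ℂ) (hq : ‖q‖ < 1) (hw : ‖w‖ < 1) (hq1 : q ≠ 1)
    (r : ℕ) (hr : 1 ≤ r) (n : ℕ) :
    HasSum (fun m : ℕ => (2 : ℂ) ^ r * ((m + r - 1).choose m : ℂ) * (-1) ^ m * w ^ m *
        ((1 - q ^ m) / (1 - q)) ^ n)
      ((2 : ℂ) ^ r / (1 - q) ^ n *
        ∑ l ∈ Finset.range (n + 1), (n.choose l : ℂ) * (-1) ^ l * (1 / (1 + q ^ l * w)) ^ r) := by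
  have hq0 : (1 : ℂ) - q ≠ 0 := sub_ne_zero.2 (Ne.symm hq1)
  -- per-l series
  have key : ∀ l : ℕ, HasSum
      (fun m : ℕ => ((2 : ℂ) ^ r / (1 - q) ^ n * ((n.choose l : ℂ) * (-1) ^ l)) *
        (((m + (r - 1)).choose (r - 1) : ℂ) * (-(q ^ l * w)) ^ m))
      (((2 : ℂ) ^ r / (1 - q) ^ n * ((n.choose l : ℂ) * (-1) ^ l)) *
        (1 / (1 + q ^ l * w)) ^ r) := by
    intro l
    have hx : ‖-(q ^ l * w)‖ < 1 := by
      rw [norm_neg, norm_mul, norm_pow]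
      calc ‖q‖ ^ l * ‖w‖ ≤ 1 * ‖w‖ := by
            gcongr
            exact pow_le_one₀ (norm_nonneg q) hq.le
        _ < 1 := by simpa using hw
    have h := hasSum_choose_mul_geometric_of_norm_lt_one (𝕜 := ℂ) (r - 1) hx
    have hrr : r - 1 + 1 = r := Nat.succ_pred_eq_of_pos hr
    rw [hrr] at h
    have h1x : (1 : ℂ) - -(q ^ l * w) = 1 + q ^ l * w := by ring
    rw [h1x, ← one_div_pow, div_pow, one_pow] at h
    simpa using h.mul_left _
  have total := hasSum_sum (f := fun l m =>
      ((2 : ℂ) ^ r / (1 - q) ^ n * ((n.choose l : ℂ) * (-1) ^ l)) *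
        (((m + (r - 1)).choose (r - 1) : ℂ) * (-(q ^ l * w)) ^ m))
    (s := Finset.range (n + 1)) (fun l _ => key l)
  have heq : (fun m : ℕ => ∑ l ∈ Finset.range (n + 1),
      ((2 : ℂ) ^ r / (1 - q) ^ n * ((n.choose l : ℂ) * (-1) ^ l)) *
        (((m + (r - 1)).choose (r - 1) : ℂ) * (-(q ^ l * w)) ^ m)) =
      (fun m : ℕ => (2 : ℂ) ^ r * ((m + r - 1).choose m : ℂ) * (-1) ^ m * w ^ m *
        ((1 - q ^ m) / (1 - q)) ^ n) := by
    funext m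
    have hch : ((m + r - 1).choose m : ℂ) = ((m + (r - 1)).choose (r - 1) : ℂ) := by
      have h1 : m + r - 1 = m + (r - 1) := by omega
      have h2 : (m + (r - 1)).choose (r - 1) = (m + (r - 1)).choose m := by
        have := Nat.choose_symm (n := m + (r - 1)) (k := m) (by omega)
        rwa [show m + (r - 1) - m = r - 1 by omega] at this
      rw [h1, h2]
    have hbin : ((1 : ℂ) - q ^ m) ^ n =
        ∑ l ∈ Finset.range (n + 1), (-(q ^ m)) ^ l * (n.choose l : ℂ) := by
      have := add_pow (-(q ^ m)) (1 : ℂ) n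
      simpa [sub_eq_add_neg, add_comm] using this
    rw [hch, div_pow, hbin, Finset.sum_div, Finset.mul_sum]
    apply Finset.sum_congr rfl
    intro l _
    have hqm : (-(q ^ m)) ^ l = (-1 : ℂ) ^ l * (q ^ m) ^ l := by rw [neg_pow]
    have hql : (-(q ^ l * w)) ^ m = (-1 : ℂ) ^ m * (q ^ l) ^ m * w ^ m := by
      rw [neg_pow, mul_pow]; ring
    rw [hqm, hql, ← pow_mul, ← pow_mul, Nat.mul_comm l m]
    ring
  rw [heq] at total
  rw [Finset.mul_sum]
  convert total using 2 with l
  ring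
end

section
/- Let q, w, x be complex numbers with |q| < 1, |w| < 1, q ≠ 1, x real with 0 ≤ x, let r ≥ 1 and n ≥ 0 be integers. Then 2^r Σ_{m=0}^∞ C(m+r-1, m) (-1)^m w^m [m+x]_q^n = (2^r/(1-q)^n) Σ_{l=0}^n C(n,l) (-1)^l q^{l x} (1/(1 + q^l w))^r. -/
/-- The `q`-extension of the `w`-Euler polynomials of order `r`:
series and finite-sum expressions agree (take `q` real with `0 < q < 1`). -/
theorem qEuler_poly_hasSum (q : ℝ) (hq0 : 0 < q) (hq1 : q < 1) (w : ℂ) (hw : ‖w‖ < 1)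
    (x : ℝ) (hx : 0 ≤ x) (r : ℕ) (hr : 1 ≤ r) (n : ℕ) :
    HasSum (fun m : ℕ => (2 : ℂ) ^ r * ((m + r - 1).choose m : ℂ) * (-1) ^ m * w ^ m *
        (((1 - q ^ ((m : ℝ) + x)) / (1 - q) : ℝ) : ℂ) ^ n)
      ((2 : ℂ) ^ r / ((1 : ℂ) - (q : ℂ)) ^ n *
        ∑ l ∈ Finset.range (n + 1), (n.choose l : ℂ) * (-1) ^ l *
          ((q ^ ((l : ℝ) * x) : ℝ) : ℂ) * (1 / (1 + (q : ℂ) ^ l * w)) ^ r) := by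
  set C : ℕ → ℂ := fun l => (2 : ℂ) ^ r / ((1 : ℂ) - (q : ℂ)) ^ n * (n.choose l : ℂ) *
      (-1) ^ l * ((q ^ ((l : ℝ) * x) : ℝ) : ℂ) with hC
  have hz : ∀ l : ℕ, ‖-((q : ℂ) ^ l * w)‖ < 1 := by
    intro l
    rw [norm_neg, norm_mul, norm_pow, Complex.norm_real]
    calc ‖q‖ ^ l * ‖w‖ ≤ 1 * ‖w‖ := by
          apply mul_le_mul_of_nonneg_right _ (norm_nonneg w)
          exact pow_le_one₀ (norm_nonneg q) (by rw [Real.norm_eq_abs, abs_of_pos hq0]; linarith)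
      _ < 1 := by simpa using hw
  have key : ∀ l ∈ Finset.range (n + 1),
      HasSum (fun m : ℕ => C l * (((m + (r - 1)).choose (r - 1) : ℂ) * (-((q : ℂ) ^ l * w)) ^ m))
        (C l * (1 / (1 - -((q : ℂ) ^ l * w)) ^ ((r - 1) + 1))) := fun l _ =>
    (hasSum_choose_mul_geometric_of_norm_lt_one (r - 1) (hz l)).mul_left (C l)
  have H := hasSum_sum key
  have hfun : (fun m : ℕ => (2 : ℂ) ^ r * ((m + r - 1).choose m : ℂ) * (-1) ^ m * w ^ m *
      (((1 - q ^ ((m : ℝ) + x)) / (1 - q) : ℝ) : ℂ) ^ n) =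
      fun m : ℕ => ∑ l ∈ Finset.range (n + 1),
        C l * (((m + (r - 1)).choose (r - 1) : ℂ) * (-((q : ℂ) ^ l * w)) ^ m) := by
    funext m
    have hch : ((m + r - 1).choose m : ℂ) = ((m + (r - 1)).choose (r - 1) : ℂ) := by
      congr 1
      rw [show m + r - 1 = m + (r - 1) by omega, Nat.choose_symm_add]
    have hrw : q ^ ((m : ℝ) + x) = q ^ (m : ℕ) * q ^ x := by
      rw [Real.rpow_add hq0, Real.rpow_natCast]
    rw [hch, hrw]
    push_cast
    have hb : ∀ l : ℕ, ((q ^ ((l : ℝ) * x) : ℝ) : ℂ) = (((q ^ x : ℝ)) : ℂ) ^ l := by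
      intro l
      rw [mul_comm, Real.rpow_mul hq0.le, Real.rpow_natCast]
      push_cast
      ring
    have hexp : ((1 : ℂ) - (q : ℂ) ^ m * ((q ^ x : ℝ) : ℂ)) ^ n =
        ∑ l ∈ Finset.range (n + 1),
          (-((q : ℂ) ^ m * ((q ^ x : ℝ) : ℂ))) ^ l * (1 : ℂ) ^ (n - l) * (n.choose l : ℂ) := by
      rw [show (1 : ℂ) - (q : ℂ) ^ m * ((q ^ x : ℝ) : ℂ) =
        -((q : ℂ) ^ m * ((q ^ x : ℝ) : ℂ)) + 1 by ring, add_pow]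
    rw [div_pow, hexp, Finset.sum_div, Finset.mul_sum]
    refine Finset.sum_congr rfl fun l _ => ?_
    rw [hC]
    simp only [hb l]
    field_simp
    ring
  have hval : (2 : ℂ) ^ r / ((1 : ℂ) - (q : ℂ)) ^ n *
      ∑ l ∈ Finset.range (n + 1), (n.choose l : ℂ) * (-1) ^ l *
        ((q ^ ((l : ℝ) * x) : ℝ) : ℂ) * (1 / (1 + (q : ℂ) ^ l * w)) ^ r =
      ∑ l ∈ Finset.range (n + 1), C l * (1 / (1 - -((q : ℂ) ^ l * w)) ^ ((r - 1) + 1)) := by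
    rw [Finset.mul_sum]
    refine Finset.sum_congr rfl fun l _ => ?_
    rw [hC, sub_neg_eq_add, show r - 1 + 1 = r by omega]
    ring
  rw [hfun, hval]
  exact H
end

section
/- Let 0 < q < 1 and 0 < w < 1 be reals, r ≥ 1, n ≥ 0 integers, and x ≥ 0 a real. Define E^{(r)}_{n,w,q}(x) = 2^r Σ_{m=0}^∞ C(m+r-1, m)(-1)^m w^m [m+x]_q^n. Then for every odd positive integer d, E^{(r)}_{n,w,q}(x) = [d]_q^n · Σ_{a_1,...,a_r = 0}^{d-1} (∏_{i=1}^r w^{a_i}) (-1)^{a_1+⋯+a_r} E^{(r)}_{n, w^d, q^d}((a_1+⋯+a_r+x)/d). -/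
open Finset


/-- The `q`-extension of the `w`-Euler polynomial of order `r`:
`E r n w q x = 2^r Σ_{m} C(m+r-1,m)(-1)^m w^m [m+x]_q^n`. -/
noncomputable def qwEuler (r n : ℕ) (w q x : ℝ) : ℝ :=
  2 ^ r * ∑' m : ℕ, ((m + r - 1).choose m : ℝ) * (-1) ^ m * w ^ m *
    ((1 - q ^ ((m : ℝ) + x)) / (1 - q)) ^ n


private lemma choose_eq (r m : ℕ) (hr : 1 ≤ r) :
    ((m + r - 1).choose m) = (m + (r - 1)).choose (r - 1) := by
  have h1 : m + r - 1 = m + (r - 1) := by omega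
  rw [h1]
  have h2 := Nat.choose_symm (Nat.le_add_left (r - 1) m)
  rw [Nat.add_sub_cancel] at h2
  exact h2

lemma qwEuler_closed (q w x : ℝ) (hq0 : 0 < q) (hq1 : q < 1) (hw0 : 0 < w) (hw1 : w < 1)
    (r n : ℕ) (hr : 1 ≤ r) :
    qwEuler r n w q x = 2 ^ r * ∑ j ∈ Finset.range (n + 1),
      (n.choose j : ℝ) * (-(q ^ x)) ^ j * ((1 - q) ^ n)⁻¹ * ((1 + w * q ^ j) ^ r)⁻¹ := by
  have hsum : ∀ j : ℕ, ‖-(w * q ^ j)‖ < 1 := by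
    intro j
    rw [norm_neg, Real.norm_eq_abs, abs_of_pos (by positivity)]
    calc w * q ^ j ≤ w * 1 := by
          exact mul_le_mul_of_nonneg_left (pow_le_one₀ hq0.le hq1.le) hw0.le
      _ < 1 := by linarith
  unfold qwEuler
  congr 1
  have hterm : ∀ m : ℕ,
      ((m + r - 1).choose m : ℝ) * (-1) ^ m * w ^ m * ((1 - q ^ ((m : ℝ) + x)) / (1 - q)) ^ n
      = ∑ j ∈ Finset.range (n + 1),
        ((n.choose j : ℝ) * (-(q ^ x)) ^ j * ((1 - q) ^ n)⁻¹) *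
          (((m + (r - 1)).choose (r - 1) : ℝ) * (-(w * q ^ j)) ^ m) := by
    intro m
    have h1 : q ^ ((m : ℝ) + x) = q ^ m * q ^ x := by
      rw [Real.rpow_add hq0, Real.rpow_natCast]
    rw [h1, choose_eq r m hr, div_pow]
    have h2 : (1 - q ^ m * q ^ x) ^ n
        = ∑ j ∈ Finset.range (n + 1), (-(q ^ m * q ^ x)) ^ j * (n.choose j : ℝ) := by
      have h3 := add_pow (-(q ^ m * q ^ x)) 1 n
      simp only [one_pow, mul_one] at h3
      rw [show (1 : ℝ) - q ^ m * q ^ x = -(q ^ m * q ^ x) + 1 by ring, h3]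
    rw [h2, Finset.sum_div, Finset.mul_sum]
    refine Finset.sum_congr rfl fun j _ => ?_
    rw [div_eq_mul_inv]
    ring
  simp only [hterm]
  rw [Summable.tsum_finsetSum (fun j _ =>
    ((summable_choose_mul_geometric_of_norm_lt_one (r - 1) (hsum j)).mul_left _))]
  refine Finset.sum_congr rfl fun j _ => ?_
  rw [tsum_mul_left, tsum_choose_mul_geometric_of_norm_lt_one (r - 1) (hsum j)]
  rw [show (1 : ℝ) - (-(w * q ^ j)) = 1 + w * q ^ j by ring, show r - 1 + 1 = r by omega, one_div]

/-- Distribution relation for the `q`-extension of the `w`-Euler polynomials of order `r`. -/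
theorem qwEuler_distribution (q w : ℝ) (hq0 : 0 < q) (hq1 : q < 1) (hw0 : 0 < w) (hw1 : w < 1)
    (r : ℕ) (hr : 1 ≤ r) (n : ℕ) (x : ℝ) (hx : 0 ≤ x) (d : ℕ) (hd : Odd d) (hd0 : 0 < d) :
    qwEuler r n w q x =
      ((1 - q ^ (d : ℝ)) / (1 - q)) ^ n *
        ∑ a : Fin r → Fin d,
          (∏ i, w ^ (a i : ℕ)) * (-1) ^ (∑ i, (a i : ℕ)) *
            qwEuler r n (w ^ d) (q ^ d) (((∑ i, (a i : ℕ) : ℕ) + x) / d) := by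
  have hqd0 : (0:ℝ) < q ^ d := pow_pos hq0 d
  have hqd1 : (q:ℝ) ^ d < 1 := pow_lt_one₀ hq0.le hq1 hd0.ne'
  have hwd0 : (0:ℝ) < w ^ d := pow_pos hw0 d
  have hwd1 : (w:ℝ) ^ d < 1 := pow_lt_one₀ hw0.le hw1 hd0.ne'
  have hrd : q ^ (d : ℝ) = q ^ d := Real.rpow_natCast q d
  rw [hrd, qwEuler_closed q w x hq0 hq1 hw0 hw1 r n hr]
  have key : ∀ a : Fin r → Fin d,
      qwEuler r n (w ^ d) (q ^ d) (((∑ i, (a i : ℕ) : ℕ) + x) / d)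
      = 2 ^ r * ∑ j ∈ Finset.range (n + 1),
        (n.choose j : ℝ) * ((-(q ^ x)) ^ j * (q ^ j) ^ (∑ i, (a i : ℕ))) *
          ((1 - q ^ d) ^ n)⁻¹ * ((1 + w ^ d * (q ^ d) ^ j) ^ r)⁻¹ := by
    intro a
    rw [qwEuler_closed _ _ _ hqd0 hqd1 hwd0 hwd1 r n hr]
    have hS : ((q:ℝ) ^ d) ^ ((((∑ i, (a i : ℕ) : ℕ) : ℝ) + x) / (d:ℝ))
        = q ^ (∑ i, (a i : ℕ)) * q ^ x := by
      rw [← Real.rpow_natCast q d, ← Real.rpow_mul hq0.le]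
      have hmul : (d:ℝ) * ((((∑ i, (a i : ℕ) : ℕ) : ℝ) + x) / (d:ℝ))
          = ((∑ i, (a i : ℕ) : ℕ) : ℝ) + x := by
        field_simp
      rw [hmul, Real.rpow_add hq0, Real.rpow_natCast]
    rw [hS]
    congr 1
    refine Finset.sum_congr rfl fun j _ => ?_
    ring
  simp only [key]
  symm
  rw [Finset.mul_sum]
  simp_rw [Finset.mul_sum]
  rw [Finset.sum_comm]
  refine Finset.sum_congr rfl fun j _ => ?_
  have hB : (0:ℝ) < 1 + w * q ^ j := by positivity
  have hA : (0:ℝ) < 1 + w ^ d * (q ^ d) ^ j := by positivity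
  have hne : -(w * q ^ j) ≠ 1 := by nlinarith [pow_pos hq0 j]
  have hprod : ∀ a : Fin r → Fin d,
      (∏ i, w ^ (a i : ℕ)) * (-1:ℝ) ^ (∑ i, (a i : ℕ)) * (q ^ j) ^ (∑ i, (a i : ℕ))
      = ∏ i, (-(w * q ^ j)) ^ (a i : ℕ) := by
    intro a
    rw [← Finset.prod_pow_eq_pow_sum, ← Finset.prod_pow_eq_pow_sum, ← Finset.prod_mul_distrib,
      ← Finset.prod_mul_distrib]
    refine Finset.prod_congr rfl fun i _ => ?_
    rw [← mul_pow, ← mul_pow]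
    congr 1
    ring
  have hgeom : ∑ a : Fin r → Fin d, ∏ i, (-(w * q ^ j)) ^ (a i : ℕ)
      = ((1 + w ^ d * (q ^ d) ^ j) / (1 + w * q ^ j)) ^ r := by
    rw [← Fintype.sum_pow (fun b : Fin d => (-(w * q ^ j)) ^ (b : ℕ)) r]
    congr 1
    rw [Fin.sum_univ_eq_sum_range (fun b => (-(w * q ^ j)) ^ b) d, geom_sum_eq hne d]
    have hc : (-(w * q ^ j)) ^ d = -(w ^ d * (q ^ d) ^ j) := by
      rw [hd.neg_pow, mul_pow, ← pow_mul, ← pow_mul, mul_comm j d]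
    rw [hc, div_eq_div_iff (by nlinarith [pow_pos hq0 j]) (ne_of_gt hB)]
    ring
  have h1 : ∀ a : Fin r → Fin d,
      ((1 - q ^ d) / (1 - q)) ^ n *
        (((∏ i, w ^ (a i : ℕ)) * (-1:ℝ) ^ (∑ i, (a i : ℕ))) *
          (2 ^ r * ((n.choose j : ℝ) * ((-(q ^ x)) ^ j * (q ^ j) ^ (∑ i, (a i : ℕ))) *
            ((1 - q ^ d) ^ n)⁻¹ * ((1 + w ^ d * (q ^ d) ^ j) ^ r)⁻¹)))
      = (∏ i, (-(w * q ^ j)) ^ (a i : ℕ)) *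
          (((1 - q ^ d) / (1 - q)) ^ n * (2 ^ r * ((n.choose j : ℝ) * (-(q ^ x)) ^ j *
            ((1 - q ^ d) ^ n)⁻¹ * ((1 + w ^ d * (q ^ d) ^ j) ^ r)⁻¹))) := by
    intro a
    rw [← hprod a]
    ring
  rw [Finset.sum_congr rfl fun a _ => h1 a, ← Finset.sum_mul, hgeom]
  have hq1ne : (1:ℝ) - q ≠ 0 := by linarith
  have hqdne : (1:ℝ) - q ^ d ≠ 0 := by linarith
  rw [div_pow, div_pow]
  field_simp
end

section
/- Let q, w be complex with |q| < 1, |w| < 1, q ≠ 1, let r ≥ 1, n ≥ 0 be integers and x ≥ 0 a real (or take 0 < q < 1 real). Then taking h = r - 1 in the (h,q)-extension gives: 2^r Σ_{m=0}^∞ qbinom(m+r-1, m; q) (-1)^m w^m [m+x]_q^n = (2^r/(1-q)^n) Σ_{l=0}^n C(n,l)(-1)^l q^{l x} / ∏_{i=0}^{r-1}(1 + q^{l+i} w). -/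
open Finset

/-- Gaussian (q-)binomial coefficient over ℝ. -/
noncomputable def qbinomR (a b : ℕ) (q : ℝ) : ℝ :=
  ∏ i ∈ Finset.range b, (1 - q ^ (a - b + i + 1)) / (1 - q ^ (i + 1))

noncomputable def cq (q : ℝ) (r m : ℕ) : ℝ :=
  ∏ i ∈ Finset.range m, (1 - q ^ (r + i)) / (1 - q ^ (i + 1))

variable {q : ℝ}

lemma one_sub_pow_pos (hq0 : 0 < q) (hq1 : q < 1) (k : ℕ) (hk : 1 ≤ k) :
    0 < 1 - q ^ k := by
  have : q ^ k < 1 := pow_lt_one₀ hq0.le hq1 (by omega)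
  linarith

lemma cq_nonneg (hq0 : 0 < q) (hq1 : q < 1) (r m : ℕ) : 0 ≤ cq q r m := by
  apply Finset.prod_nonneg
  intro i _
  apply div_nonneg
  · have : q ^ (r + i) ≤ 1 := pow_le_one₀ hq0.le hq1.le
    linarith
  · exact (one_sub_pow_pos hq0 hq1 (i+1) (by omega)).le

lemma cq_succ (r m : ℕ) :
    cq q r (m + 1) = cq q r m * ((1 - q ^ (r + m)) / (1 - q ^ (m + 1))) := by
  simp only [cq, Finset.prod_range_succ]

lemma cq_reindex (hq0 : 0 < q) (hq1 : q < 1) (r m : ℕ) :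
    cq q r (m + 1) = cq q (r + 1) m * ((1 - q ^ r) / (1 - q ^ (m + 1))) := by
  have hne : ∀ k : ℕ, 1 ≤ k → (1 - q ^ k) ≠ 0 := fun k hk => (one_sub_pow_pos hq0 hq1 k hk).ne'
  have hnum : ∏ i ∈ range (m+1), (1 - q ^ (r + i))
      = (∏ i ∈ range m, (1 - q ^ (r + 1 + i))) * (1 - q ^ r) := by
    rw [Finset.prod_range_succ']
    have h := Finset.prod_congr (rfl : range m = range m)
      (fun i _ => by rw [show r + (i + 1) = r + 1 + i from by omega] :
        ∀ i ∈ range m, (1 - q ^ (r + (i + 1))) = 1 - q ^ (r + 1 + i))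
    rw [h, add_zero]
  have hden : ∏ i ∈ range (m+1), (1 - q ^ (i + 1))
      = (∏ i ∈ range m, (1 - q ^ (i + 1))) * (1 - q ^ (m + 1)) := by
    rw [Finset.prod_range_succ]
  have h1 : cq q r (m+1) = (∏ i ∈ range (m+1), (1 - q ^ (r + i))) / ∏ i ∈ range (m+1), (1 - q ^ (i+1)) := by
    simp [cq, Finset.prod_div_distrib]
  have h2 : cq q (r+1) m = (∏ i ∈ range m, (1 - q ^ (r + 1 + i))) / ∏ i ∈ range m, (1 - q ^ (i+1)) := by
    simp [cq, Finset.prod_div_distrib]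
  rw [h1, h2, hnum, hden, div_mul_div_comm]

lemma cq_pascal (hq0 : 0 < q) (hq1 : q < 1) (r m : ℕ) :
    cq q (r + 1) (m + 1) = cq q (r + 1) m + q ^ (m + 1) * cq q r (m + 1) := by
  rw [cq_succ, cq_reindex hq0 hq1]
  have hne : (1 - q ^ (m + 1)) ≠ 0 := (one_sub_pow_pos hq0 hq1 (m+1) (by omega)).ne'
  field_simp
  ring

lemma cq_hockey (hq0 : 0 < q) (hq1 : q < 1) (r m : ℕ) :
    ∑ j ∈ range (m + 1), cq q r j * q ^ j = cq q (r + 1) m := by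
  induction m with
  | zero => simp [cq]
  | succ m ih =>
    rw [Finset.sum_range_succ, ih, cq_pascal hq0 hq1]
    ring

lemma summable_cq (hq0 : 0 < q) (hq1 : q < 1) (r : ℕ) {t : ℝ} (ht0 : 0 ≤ t) (ht1 : t < 1) :
    Summable (fun m => cq q r m * t ^ m) := by
  apply summable_of_ratio_norm_eventually_le (r := (1 + t) / 2) (by linarith)
  have hev : ∀ᶠ m : ℕ in Filter.atTop, q ^ (m + 1) ≤ (1 - t) / (1 + t) := by
    have h0 : (0:ℝ) < (1 - t) / (1 + t) := div_pos (by linarith) (by linarith)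
    have := (tendsto_pow_atTop_nhds_zero_of_lt_one hq0.le hq1).eventually
      (eventually_le_nhds h0)
    filter_upwards [this] with m hm
    calc q ^ (m + 1) ≤ q ^ m := pow_le_pow_of_le_one hq0.le hq1.le (by omega)
    _ ≤ (1 - t) / (1 + t) := hm
  filter_upwards [hev] with m hm
  have hcm := cq_nonneg hq0 hq1 r m
  have htm : (0:ℝ) ≤ t ^ m := pow_nonneg ht0 m
  have hd : 0 < 1 - q ^ (m + 1) := one_sub_pow_pos hq0 hq1 (m+1) (by omega)
  rw [Real.norm_eq_abs, Real.norm_eq_abs,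
    abs_of_nonneg (mul_nonneg (cq_nonneg hq0 hq1 r (m+1)) (pow_nonneg ht0 _)),
    abs_of_nonneg (mul_nonneg hcm htm), cq_succ]
  have hratio : (1 - q ^ (r + m)) / (1 - q ^ (m + 1)) * t ≤ (1 + t) / 2 := by
    have hnum : 1 - q ^ (r + m) ≤ 1 := by
      have : (0:ℝ) ≤ q ^ (r + m) := by positivity
      linarith
    have h1 : (1 - q ^ (r + m)) / (1 - q ^ (m + 1)) * t ≤ 1 / (1 - q ^ (m + 1)) * t := by
      apply mul_le_mul_of_nonneg_right _ ht0
      exact div_le_div_of_nonneg_right hnum hd.le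
    have h2 : 1 / (1 - q ^ (m + 1)) * t ≤ (1 + t) / 2 := by
      rw [div_mul_eq_mul_div, one_mul, div_le_div_iff₀ hd (by norm_num)]
      have : q ^ (m + 1) * (1 + t) ≤ 1 - t := by
        have h1t : (0:ℝ) < 1 + t := by linarith
        calc q ^ (m + 1) * (1 + t) ≤ (1 - t) / (1 + t) * (1 + t) :=
          mul_le_mul_of_nonneg_right hm h1t.le
        _ = 1 - t := by field_simp
      nlinarith
    linarith
  calc cq q r m * ((1 - q ^ (r + m)) / (1 - q ^ (m + 1))) * t ^ (m + 1)
      = ((1 - q ^ (r + m)) / (1 - q ^ (m + 1)) * t) * (cq q r m * t ^ m) := by ring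
    _ ≤ (1 + t) / 2 * (cq q r m * t ^ m) := by
        apply mul_le_mul_of_nonneg_right hratio (by positivity)

lemma genfun (hq0 : 0 < q) (hq1 : q < 1) (r : ℕ) (hr : 1 ≤ r) (z : ℂ) (hz : ‖z‖ < 1) :
    HasSum (fun m : ℕ => (cq q r m : ℂ) * z ^ m)
      (∏ i ∈ Finset.range r, (1 - (q : ℂ) ^ i * z))⁻¹ := by
  induction r, hr using Nat.le_induction generalizing z with
  | base =>
    have h1 : ∀ m : ℕ, cq q 1 m = 1 := by
      intro m
      apply Finset.prod_eq_one
      intro i _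
      rw [show 1 + i = i + 1 from by omega]
      exact div_self (one_sub_pow_pos hq0 hq1 (i+1) (by omega)).ne'
    simp only [h1, Complex.ofReal_one, one_mul, Finset.prod_range_one, pow_zero, one_mul]
    exact hasSum_geometric_of_norm_lt_one hz
  | succ r hr ih =>
    have hqz : ‖(q : ℂ) * z‖ < 1 := by
      rw [norm_mul, Complex.norm_real, Real.norm_eq_abs, abs_of_pos hq0]
      calc q * ‖z‖ ≤ 1 * ‖z‖ := by nlinarith [norm_nonneg z]
        _ < 1 := by rwa [one_mul]
    set f : ℕ → ℂ := fun j => (cq q r j : ℂ) * ((q : ℂ) * z) ^ j with hf_def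
    set g : ℕ → ℂ := fun k => z ^ k with hg_def
    have hf : HasSum f (∏ i ∈ Finset.range r, (1 - (q : ℂ) ^ i * ((q:ℂ) * z)))⁻¹ := ih _ hqz
    have hg : HasSum g (1 - z)⁻¹ := hasSum_geometric_of_norm_lt_one hz
    have hf' : Summable fun j => ‖f j‖ := by
      have : ∀ j, ‖f j‖ = cq q r j * ‖(q:ℂ) * z‖ ^ j := by
        intro j
        rw [hf_def]
        simp only [norm_mul, norm_pow, Complex.norm_real, Real.norm_eq_abs,
          abs_of_nonneg (cq_nonneg hq0 hq1 r j)]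
      simp only [this]
      exact summable_cq hq0 hq1 r (norm_nonneg _) hqz
    have hg' : Summable fun k => ‖g k‖ := by
      simp only [hg_def, norm_pow]
      exact summable_geometric_of_lt_one (norm_nonneg z) hz
    have hsum : Summable fun m => ∑ k ∈ range (m+1), f k * g (m - k) :=
      (summable_norm_sum_mul_range_of_summable_norm hf' hg').of_norm
    have htsum : (∑' m, f m) * (∑' m, g m) = ∑' m, ∑ k ∈ range (m+1), f k * g (m - k) :=
      tsum_mul_tsum_eq_tsum_sum_range_of_summable_norm hf' hg'
    have hcauchy : HasSum (fun m => ∑ k ∈ range (m+1), f k * g (m - k))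
        ((∏ i ∈ Finset.range r, (1 - (q : ℂ) ^ i * ((q:ℂ) * z)))⁻¹ * (1 - z)⁻¹) := by
      have := hsum.hasSum
      rwa [← htsum, hf.tsum_eq, hg.tsum_eq] at this
    have hfe : (fun m : ℕ => (cq q (r+1) m : ℂ) * z ^ m)
        = fun m => ∑ k ∈ range (m+1), f k * g (m - k) := by
      funext m
      have : ∀ k ∈ range (m+1), f k * g (m - k) = (cq q r k * q ^ k : ℝ) * z ^ m := by
        intro k hk
        rw [Finset.mem_range] at hk
        rw [hf_def, hg_def]
        push_cast
        rw [mul_pow]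
        have hz' : z ^ k * z ^ (m - k) = z ^ m := by
          rw [← pow_add]; congr 1; omega
        linear_combination ((cq q r k : ℂ) * (q : ℂ) ^ k) * hz'
      rw [Finset.sum_congr rfl this, ← Finset.sum_mul, ← Complex.ofReal_sum,
        cq_hockey hq0 hq1 r m]
    have hpe : (∏ i ∈ Finset.range (r+1), (1 - (q : ℂ) ^ i * z))⁻¹
        = (∏ i ∈ Finset.range r, (1 - (q : ℂ) ^ i * ((q:ℂ) * z)))⁻¹ * (1 - z)⁻¹ := by
      rw [Finset.prod_range_succ' (fun i => 1 - (q:ℂ) ^ i * z), mul_inv]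
      congr 2
      · exact Finset.prod_congr rfl (fun i _ => by rw [pow_succ]; ring)
      · rw [pow_zero, one_mul]
    rw [hfe, hpe]
    exact hcauchy

lemma binexp (hq0 : 0 < q) (m n : ℕ) (x : ℝ) :
    (1 - q ^ ((m : ℝ) + x)) ^ n
      = ∑ l ∈ range (n + 1), (n.choose l : ℝ) * (-1) ^ l * q ^ ((l : ℝ) * x) * (q ^ l) ^ m := by
  have h := add_pow (-(q ^ ((m : ℝ) + x))) 1 n
  rw [show -(q ^ ((m : ℝ) + x)) + 1 = 1 - q ^ ((m : ℝ) + x) from by ring] at h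
  rw [h]
  apply Finset.sum_congr rfl
  intro l _
  rw [one_pow, mul_one, neg_pow]
  have hu : (q ^ ((m : ℝ) + x)) ^ l = q ^ ((l : ℝ) * x) * (q ^ l) ^ m := by
    rw [← Real.rpow_natCast (q ^ ((m : ℝ) + x)) l, ← Real.rpow_mul hq0.le,
      add_mul, Real.rpow_add hq0, mul_comm x (l : ℝ)]
    have hml : q ^ ((m : ℝ) * (l : ℝ)) = (q ^ l) ^ m := by
      rw [show (m : ℝ) * (l : ℝ) = ((m * l : ℕ) : ℝ) from by push_cast; ring,
        Real.rpow_natCast, pow_mul']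
    rw [hml]
    ring
  rw [hu]
  ring

lemma qbinom_eq_cq (r : ℕ) (hr : 1 ≤ r) (m : ℕ) : qbinomR (m + r - 1) m q = cq q r m := by
  apply Finset.prod_congr rfl
  intro i _
  rw [show m + r - 1 - m + i + 1 = r + i from by omega]

/-- The case `h = r - 1` of the `(h,q)`-extension of the `w`-Euler polynomials of order `r`
(take `q` real with `0 < q < 1`). -/
theorem hqEuler_poly_h_eq_r_sub_one (q : ℝ) (hq0 : 0 < q) (hq1 : q < 1)
    (w : ℂ) (hw : ‖w‖ < 1) (x : ℝ) (hx : 0 ≤ x) (r : ℕ) (hr : 1 ≤ r) (n : ℕ) :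
    HasSum (fun m : ℕ => (2 : ℂ) ^ r * (qbinomR (m + r - 1) m q : ℂ) * (-1) ^ m * w ^ m *
        (((1 - q ^ ((m : ℝ) + x)) / (1 - q) : ℝ) : ℂ) ^ n)
      ((2 : ℂ) ^ r / ((1 : ℂ) - (q : ℂ)) ^ n *
        ∑ l ∈ Finset.range (n + 1), (n.choose l : ℂ) * (-1) ^ l *
          ((q ^ ((l : ℝ) * x) : ℝ) : ℂ) /
            ∏ i ∈ Finset.range r, (1 + (q : ℂ) ^ (l + i) * w)) := by
  set z : ℕ → ℂ := fun l => -((q : ℂ) ^ l * w) with hz_def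
  have hz : ∀ l : ℕ, ‖z l‖ < 1 := by
    intro l
    rw [hz_def]
    simp only [norm_neg, norm_mul, norm_pow, Complex.norm_real, Real.norm_eq_abs,
      abs_of_pos hq0]
    calc q ^ l * ‖w‖ ≤ 1 * ‖w‖ := by
          apply mul_le_mul_of_nonneg_right _ (norm_nonneg w)
          exact pow_le_one₀ hq0.le hq1.le
      _ < 1 := by rwa [one_mul]
  set A : ℕ → ℂ := fun l => (2 : ℂ) ^ r / ((1 : ℂ) - (q : ℂ)) ^ n * (n.choose l : ℂ) *
    (-1) ^ l * ((q ^ ((l : ℝ) * x) : ℝ) : ℂ) with hA_def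
  have key : ∀ l ∈ range (n + 1),
      HasSum (fun m : ℕ => A l * ((cq q r m : ℂ) * (z l) ^ m))
        (A l * (∏ i ∈ Finset.range r, (1 - (q : ℂ) ^ i * z l))⁻¹) := by
    intro l _
    exact (genfun hq0 hq1 r hr (z l) (hz l)).mul_left (A l)
  have H := hasSum_sum key
  have hfun : (fun m : ℕ => (2 : ℂ) ^ r * (qbinomR (m + r - 1) m q : ℂ) * (-1) ^ m * w ^ m *
        (((1 - q ^ ((m : ℝ) + x)) / (1 - q) : ℝ) : ℂ) ^ n)
      = fun m : ℕ => ∑ l ∈ range (n + 1), A l * ((cq q r m : ℂ) * (z l) ^ m) := by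
    funext m
    rw [qbinom_eq_cq r hr m, ← Complex.ofReal_pow, div_pow, binexp hq0 m n x]
    push_cast
    rw [Finset.sum_div, Finset.mul_sum]
    apply Finset.sum_congr rfl
    intro l _
    rw [hA_def, hz_def]
    rw [neg_pow ((q : ℂ) ^ l * w), mul_pow]
    ring
  have hsum : ((2 : ℂ) ^ r / ((1 : ℂ) - (q : ℂ)) ^ n *
        ∑ l ∈ Finset.range (n + 1), (n.choose l : ℂ) * (-1) ^ l *
          ((q ^ ((l : ℝ) * x) : ℝ) : ℂ) /
            ∏ i ∈ Finset.range r, (1 + (q : ℂ) ^ (l + i) * w))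
      = ∑ l ∈ range (n + 1), A l * (∏ i ∈ Finset.range r, (1 - (q : ℂ) ^ i * z l))⁻¹ := by
    rw [Finset.mul_sum]
    apply Finset.sum_congr rfl
    intro l _
    have hP : (∏ i ∈ Finset.range r, (1 - (q : ℂ) ^ i * z l))
        = ∏ i ∈ Finset.range r, (1 + (q : ℂ) ^ (l + i) * w) := by
      apply Finset.prod_congr rfl
      intro i _
      rw [hz_def, pow_add]
      ring
    rw [hP, hA_def, div_eq_mul_inv]
    ring
  rw [hfun, hsum]
  exact H
end

section
/- Let 0 < q < 1 and 0 < w < 1 be reals and r ≥ 1 an integer, and d an odd positive integer. Then the following q-binomial splitting holds: for every integer m ≥ 0 and every nonnegative real x, the series identity 2^r Σ_{m=0}^∞ C(m+r-1,m)(-1)^m w^m e^{t[m+x]_q} = Σ_{a_1,...,a_r=0}^{d-1} (∏_i w^{a_i})(-1)^{a_1+⋯+a_r} · 2^r Σ_{m=0}^∞ C(m+r-1,m)(-1)^m w^{md} e^{t [d]_q [m + (a_1+⋯+a_r+x)/d]_{q^d}} holds for all real t. -/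
open Finset

set_option maxHeartbeats 1000000

lemma card_fiber (r m : ℕ) :
    (Finset.piAntidiag (Finset.univ : Finset (Fin r)) m).card = (m + r - 1).choose m := by
  classical
  rw [← Finset.map_sym_eq_piAntidiag, Finset.card_map]
  have h : (Finset.univ : Finset (Fin r)).sym m = Finset.univ := by
    ext s; simp [Finset.mem_sym_iff]
  rw [h, Finset.card_univ, Sym.card_sym_eq_choose, Fintype.card_fin, Nat.add_comm]

lemma summable_geom_pi {w : ℝ} (hw0 : 0 ≤ w) (hw1 : w < 1) (r : ℕ) :
    Summable (fun n : Fin r → ℕ => w ^ (∑ i, n i)) := by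
  induction r with
  | zero => exact .of_finite
  | succ r ih =>
      have key : Summable (fun p : ℕ × (Fin r → ℕ) => w ^ p.1 * w ^ (∑ i, p.2 i)) :=
        Summable.mul_of_nonneg (f := fun k : ℕ => w ^ k)
          (g := fun n : Fin r → ℕ => w ^ (∑ i, n i))
          (summable_geometric_of_lt_one hw0 hw1) ih
          (fun k => pow_nonneg hw0 k) (fun n => pow_nonneg hw0 _)
      have h2 := (Fin.consEquiv (fun _ : Fin (r+1) => ℕ)).symm.summable_iff.mpr key
      refine h2.congr fun n => ?_
      simp [Fin.consEquiv, Fin.sum_univ_succ, pow_add, Function.comp, Fin.tail]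

lemma summable_F {w : ℝ} (hw0 : 0 ≤ w) (hw1 : w < 1) (r : ℕ) (f : ℕ → ℝ) (C : ℝ)
    (hf : ∀ N, |f N| ≤ C * w ^ N) :
    Summable (fun n : Fin r → ℕ => f (∑ i, n i)) := by
  apply Summable.of_norm_bounded ((summable_geom_pi hw0 hw1 r).mul_left C)
  intro n; simpa using hf _

lemma tsum_tuple_eq {w : ℝ} (hw0 : 0 ≤ w) (hw1 : w < 1) (r : ℕ) (f : ℕ → ℝ) (C : ℝ)
    (hf : ∀ N, |f N| ≤ C * w ^ N) :
    ∑' m : ℕ, ((m + r - 1).choose m : ℝ) * f m = ∑' n : Fin r → ℕ, f (∑ i, n i) := by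
  classical
  have hF := summable_F hw0 hw1 r f C hf
  have h1 := hF.hasSum.tsum_fiberwise (fun n : Fin r → ℕ => ∑ i, n i)
  have h2 : ∀ m : ℕ,
      (∑' n : ((fun n : Fin r → ℕ => ∑ i, n i) ⁻¹' {m}), f (∑ i, (n : Fin r → ℕ) i))
        = ((m + r - 1).choose m : ℝ) * f m := by
    intro m
    have hset : ((fun n : Fin r → ℕ => ∑ i, n i) ⁻¹' {m})
        = ↑(Finset.piAntidiag (Finset.univ : Finset (Fin r)) m) := by
      ext n; simp
    rw [hset]
    refine (Finset.tsum_subtype' (Finset.piAntidiag (Finset.univ : Finset (Fin r)) m)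
      (fun n => f (∑ i, n i))).trans ?_
    rw [Finset.sum_congr rfl (fun n hn => ?_), Finset.sum_const, card_fiber, nsmul_eq_mul]
    simp only [Finset.mem_piAntidiag] at hn
    rw [hn.1]
  simp_rw [h2] at h1
  exact h1.tsum_eq

/-- Splitting of the generating function of the `q`-extension of `w`-Euler polynomials
according to residues modulo an odd `d`. -/
theorem generating_function_splitting (q w : ℝ) (hq0 : 0 < q) (hq1 : q < 1)
    (hw0 : 0 < w) (hw1 : w < 1) (r : ℕ) (hr : 1 ≤ r) (x : ℝ) (hx : 0 ≤ x)
    (d : ℕ) (hd : Odd d) (hd0 : 0 < d) (t : ℝ) :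
    2 ^ r * ∑' m : ℕ, ((m + r - 1).choose m : ℝ) * (-1) ^ m * w ^ m *
        Real.exp (t * ((1 - q ^ ((m : ℝ) + x)) / (1 - q))) =
      ∑ a : Fin r → Fin d,
        (∏ i, w ^ (a i : ℕ)) * (-1) ^ (∑ i, (a i : ℕ)) *
          (2 ^ r * ∑' m : ℕ, ((m + r - 1).choose m : ℝ) * (-1) ^ m * w ^ (m * d) *
            Real.exp (t * ((1 - q ^ (d : ℝ)) / (1 - q)) *
              ((1 - (q ^ d : ℝ) ^ ((m : ℝ) + ((∑ i, (a i : ℕ) : ℕ) + x) / d)) / (1 - q ^ d)))) := by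
  classical
  haveI : NeZero d := ⟨hd0.ne'⟩
  have hq' : (0 : ℝ) < 1 - q := by linarith
  set f : ℕ → ℝ :=
    fun N => (-1) ^ N * w ^ N * Real.exp (t * ((1 - q ^ ((N : ℝ) + x)) / (1 - q))) with hfdef
  set Ce : ℝ := Real.exp (|t| / (1 - q)) with hCe
  -- the uniform bound
  have hbound : ∀ N, |f N| ≤ Ce * w ^ N := by
    intro N
    have h1 : 0 < q ^ ((N : ℝ) + x) := Real.rpow_pos_of_pos hq0 _
    have h2 : q ^ ((N : ℝ) + x) ≤ 1 :=
      Real.rpow_le_one hq0.le hq1.le (by positivity)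
    have h3 : t * ((1 - q ^ ((N : ℝ) + x)) / (1 - q)) ≤ |t| / (1 - q) := by
      have hy0 : (0 : ℝ) ≤ (1 - q ^ ((N : ℝ) + x)) / (1 - q) := by
        apply div_nonneg (by linarith) hq'.le
      calc t * ((1 - q ^ ((N : ℝ) + x)) / (1 - q))
          ≤ |t| * ((1 - q ^ ((N : ℝ) + x)) / (1 - q)) :=
            mul_le_mul_of_nonneg_right (le_abs_self t) hy0
        _ ≤ |t| * (1 / (1 - q)) := by
            gcongr
            linarith
        _ = |t| / (1 - q) := by ring
    have : |f N| = w ^ N * Real.exp (t * ((1 - q ^ ((N : ℝ) + x)) / (1 - q))) := by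
      rw [hfdef]
      rw [abs_mul, abs_mul, abs_pow, abs_neg, abs_one, one_pow, one_mul,
        abs_pow, abs_of_nonneg hw0.le, Real.abs_exp]
    rw [this]
    rw [mul_comm Ce (w ^ N)]
    exact mul_le_mul_of_nonneg_left (Real.exp_le_exp.mpr h3) (pow_nonneg hw0.le N)
  have hd' : (d : ℝ) ≠ 0 := Nat.cast_ne_zero.mpr hd0.ne'
  have hqd1 : q ^ d < 1 := pow_lt_one₀ hq0.le hq1 hd0.ne'
  have hqdne : (1 : ℝ) - q ^ d ≠ 0 := by
    have : (0:ℝ) < 1 - q ^ d := by linarith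
    exact this.ne'
  -- rewrite the left-hand side as a sum over tuples
  have hL : (∑' m : ℕ, ((m + r - 1).choose m : ℝ) * (-1) ^ m * w ^ m *
      Real.exp (t * ((1 - q ^ ((m : ℝ) + x)) / (1 - q))))
        = ∑' n : Fin r → ℕ, f (∑ i, n i) := by
    rw [← tsum_tuple_eq hw0.le hw1 r f Ce hbound]
    exact tsum_congr fun m => by rw [hfdef]; ring
  -- key pointwise identity for the right-hand side terms
  have hterm : ∀ (S m : ℕ),
      (w : ℝ) ^ S * (-1) ^ S * ((-1) ^ m * w ^ (m * d) *
        Real.exp (t * ((1 - q ^ (d : ℝ)) / (1 - q)) *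
          ((1 - (q ^ d : ℝ) ^ ((m : ℝ) + ((S : ℝ) + x) / d)) / (1 - q ^ d))))
        = f (m * d + S) := by
    intro S m
    have hrw : ((q : ℝ) ^ d) ^ ((m : ℝ) + ((S : ℝ) + x) / d)
        = q ^ ((((m * d + S : ℕ) : ℝ)) + x) := by
      rw [← Real.rpow_natCast q d, ← Real.rpow_mul hq0.le]
      congr 1
      push_cast
      field_simp
      ring
    have harg : t * ((1 - q ^ (d : ℝ)) / (1 - q)) *
        ((1 - (q ^ d : ℝ) ^ ((m : ℝ) + ((S : ℝ) + x) / d)) / (1 - q ^ d))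
          = t * ((1 - q ^ ((((m * d + S : ℕ) : ℝ)) + x)) / (1 - q)) := by
      rw [hrw, Real.rpow_natCast]
      field_simp
    rw [harg, hfdef]
    beta_reduce
    have hsign : ((-1 : ℝ)) ^ (m * d + S) = (-1) ^ m * (-1) ^ S := by
      rw [pow_add, mul_comm m d, pow_mul, Odd.neg_one_pow hd]
    have hwpow : (w : ℝ) ^ (m * d + S) = w ^ (m * d) * w ^ S := pow_add w _ _
    rw [hsign, hwpow]
    ring
  -- per-residue computation
  have hA : ∀ a : Fin r → Fin d,
      (∏ i, w ^ (a i : ℕ)) * (-1) ^ (∑ i, (a i : ℕ)) *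
        (2 ^ r * ∑' m : ℕ, ((m + r - 1).choose m : ℝ) * (-1) ^ m * w ^ (m * d) *
          Real.exp (t * ((1 - q ^ (d : ℝ)) / (1 - q)) *
            ((1 - (q ^ d : ℝ) ^ ((m : ℝ) + ((∑ i, (a i : ℕ) : ℕ) + x) / d)) / (1 - q ^ d))))
        = 2 ^ r * ∑' k : Fin r → ℕ, f (∑ i, ((k i) * d + (a i : ℕ))) := by
    intro a
    set S : ℕ := ∑ i, (a i : ℕ) with hS
    rw [Finset.prod_pow_eq_pow_sum, ← hS]
    have hb' : ∀ m, |f (m * d + S)| ≤ (Ce * w ^ S) * (w ^ d) ^ m := by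
      intro m
      calc |f (m * d + S)| ≤ Ce * w ^ (m * d + S) := hbound _
        _ = (Ce * w ^ S) * (w ^ d) ^ m := by
            rw [pow_add, ← pow_mul, mul_comm d m]; ring
    have h3 := tsum_tuple_eq (pow_nonneg hw0.le d) (pow_lt_one₀ hw0.le hw1 hd0.ne')
      r (fun m => f (m * d + S)) (Ce * w ^ S) hb'
    have hsum : w ^ S * (-1 : ℝ) ^ S *
        ∑' m : ℕ, ((m + r - 1).choose m : ℝ) * (-1) ^ m * w ^ (m * d) *
          Real.exp (t * ((1 - q ^ (d : ℝ)) / (1 - q)) *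
            ((1 - (q ^ d : ℝ) ^ ((m : ℝ) + ((S : ℝ) + x) / d)) / (1 - q ^ d)))
          = ∑' k : Fin r → ℕ, f (∑ i, ((k i) * d + (a i : ℕ))) := by
      rw [← tsum_mul_left]
      rw [show (∑' k : Fin r → ℕ, f (∑ i, ((k i) * d + (a i : ℕ))))
            = ∑' k : Fin r → ℕ, f ((∑ i, k i) * d + S) from
          tsum_congr fun k => by rw [Finset.sum_add_distrib, ← Finset.sum_mul, hS]]
      rw [← h3]
      refine tsum_congr fun m => ?_
      beta_reduce
      rw [← hterm S m]
      ring
    calc w ^ S * (-1 : ℝ) ^ S * (2 ^ r *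
          ∑' m : ℕ, ((m + r - 1).choose m : ℝ) * (-1) ^ m * w ^ (m * d) *
            Real.exp (t * ((1 - q ^ (d : ℝ)) / (1 - q)) *
              ((1 - (q ^ d : ℝ) ^ ((m : ℝ) + ((S : ℝ) + x) / d)) / (1 - q ^ d))))
        = 2 ^ r * (w ^ S * (-1 : ℝ) ^ S *
          ∑' m : ℕ, ((m + r - 1).choose m : ℝ) * (-1) ^ m * w ^ (m * d) *
            Real.exp (t * ((1 - q ^ (d : ℝ)) / (1 - q)) *
              ((1 - (q ^ d : ℝ) ^ ((m : ℝ) + ((S : ℝ) + x) / d)) / (1 - q ^ d)))) := by ring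
      _ = 2 ^ r * ∑' k : Fin r → ℕ, f (∑ i, ((k i) * d + (a i : ℕ))) := by rw [hsum]
  -- regroup the tuple sum according to residues
  have hsummable : Summable (fun n : Fin r → ℕ => f (∑ i, n i)) :=
    summable_F hw0.le hw1 r f Ce hbound
  have hRsum : ∑ a : Fin r → Fin d, ∑' k : Fin r → ℕ, f (∑ i, ((k i) * d + (a i : ℕ)))
      = ∑' n : Fin r → ℕ, f (∑ i, n i) := by
    set j : (Fin r → ℕ) ≃ (Fin r → Fin d) × (Fin r → ℕ) :=
      ((Equiv.piCongrRight (fun _ : Fin r => Nat.divModEquiv d)).trans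
        (Equiv.arrowProdEquivProdArrow (Fin r) (fun _ => ℕ) (fun _ => Fin d))).trans (Equiv.prodComm _ _) with hj
    set G : (Fin r → Fin d) × (Fin r → ℕ) → ℝ :=
      fun p => f (∑ i, ((p.2 i) * d + (p.1 i : ℕ))) with hG
    have hcomp : ∀ n : Fin r → ℕ, G (j n) = f (∑ i, n i) := by
      intro n
      rw [hG, hj]
      apply congrArg f
      apply Finset.sum_congr rfl
      intro i _
      simp [Equiv.piCongrRight, Equiv.arrowProdEquivProdArrow, Nat.divModEquiv]
      exact Nat.div_add_mod' (n i) d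
    have hGsummable : Summable G := by
      rw [← j.summable_iff]
      exact hsummable.congr fun n => (hcomp n).symm
    have h1 : ∑' n : Fin r → ℕ, f (∑ i, n i) = ∑' p, G p := by
      rw [← j.tsum_eq G]
      exact tsum_congr fun n => (hcomp n).symm
    rw [h1, Summable.tsum_prod hGsummable, tsum_fintype]
  -- put everything together
  rw [hL]
  calc 2 ^ r * ∑' n : Fin r → ℕ, f (∑ i, n i)
      = 2 ^ r * ∑ a : Fin r → Fin d, ∑' k : Fin r → ℕ,
          f (∑ i, ((k i) * d + (a i : ℕ))) := by rw [hRsum]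
    _ = ∑ a : Fin r → Fin d, 2 ^ r * ∑' k : Fin r → ℕ,
          f (∑ i, ((k i) * d + (a i : ℕ))) := by rw [Finset.mul_sum]
    _ = _ := by
        refine Finset.sum_congr rfl fun a _ => ?_
        rw [hA a]
end
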